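/- arXiv:2209.08566 — 4 statements merged into one kernel-verified Lean document; each statement's English description precedes it below -/
import Mathlib

section
/- Let L be a lattice and L₀ a sublattice of L such that for every a ∈ L, the set {b ∈ L₀ : b ≤ a} has a maximum and the set {b ∈ L₀ : a ≤ b} has a minimum (i.e., L₀ is relatively complete in L). Define ◻₀a := max{b ∈ L₀ : b ≤ a} and ◇₀a := min{b ∈ L₀ : a ≤ b}. Then (L, ∧, ∨, ◻₀, ◇₀) is an m-lattice with ◻₀L = ◇₀L = L₀. -/
/-!
`◻₀` fixes `L₀` pointwise and is monotone with values in `L₀`; since `L₀` is closed under `⊓`,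
`◻₀ a ⊓ ◻₀ b` is the greatest element of `L₀` below `a ⊓ b`, so `◻₀` preserves meets.
`◇₀` is the same operator for the order dual of `L`, so each of its properties is the dual of one
of `◻₀`.
-/

def IsGreatestBelow {α : Type*} [LE α] (S : Set α) (f : α → α) : Prop :=
  ∀ a, IsGreatest {b | b ∈ S ∧ b ≤ a} (f a)

def IsLeastAbove {α : Type*} [LE α] (S : Set α) (f : α → α) : Prop :=
  ∀ a, IsLeast {b | b ∈ S ∧ a ≤ b} (f a)

namespace IsGreatestBelow

variable {α : Type*} {S : Set α} {f : α → α}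

theorem apply_mem [LE α] (hf : IsGreatestBelow S f) (a : α) : f a ∈ S := (hf a).1.1

theorem apply_le [LE α] (hf : IsGreatestBelow S f) (a : α) : f a ≤ a := (hf a).1.2

theorem apply_eq_self [PartialOrder α] (hf : IsGreatestBelow S f) {b : α} (hb : b ∈ S) :
    f b = b :=
  le_antisymm (hf.apply_le b) ((hf b).2 ⟨hb, le_rfl⟩)

theorem range_eq [PartialOrder α] (hf : IsGreatestBelow S f) : Set.range f = S :=
  (Set.range_subset_iff.2 hf.apply_mem).antisymm fun b hb => ⟨b, hf.apply_eq_self hb⟩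

theorem map_inf [SemilatticeInf α] (hS : InfClosed S) (hf : IsGreatestBelow S f) (a b : α) :
    f (a ⊓ b) = f a ⊓ f b :=
  le_antisymm
    (le_inf ((hf a).2 ⟨hf.apply_mem _, (hf.apply_le _).trans inf_le_left⟩)
      ((hf b).2 ⟨hf.apply_mem _, (hf.apply_le _).trans inf_le_right⟩))
    ((hf (a ⊓ b)).2 ⟨hS (hf.apply_mem a) (hf.apply_mem b),
      inf_le_inf (hf.apply_le a) (hf.apply_le b)⟩)

end IsGreatestBelow

theorem IsLeastAbove.dual {α : Type*} [LE α] {S : Set α} {f : α → α} (hf : IsLeastAbove S f) :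
    IsGreatestBelow (α := αᵒᵈ) S f :=
  hf

theorem relativelyComplete_sublattice_gives_mLattice {L : Type*} [Lattice L]
    (L₀ : Sublattice L) (box₀ dia₀ : L → L)
    (hmax : ∀ a : L, IsGreatest {b | b ∈ L₀ ∧ b ≤ a} (box₀ a))
    (hmin : ∀ a : L, IsLeast {b | b ∈ L₀ ∧ a ≤ b} (dia₀ a)) :
    (∀ a, box₀ a ⊓ a = box₀ a) ∧
    (∀ a, dia₀ a ⊔ a = dia₀ a) ∧
    (∀ a b, box₀ (a ⊓ b) = box₀ a ⊓ box₀ b) ∧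
    (∀ a b, dia₀ (a ⊔ b) = dia₀ a ⊔ dia₀ b) ∧
    (∀ a, box₀ (dia₀ a) = dia₀ a) ∧
    (∀ a, dia₀ (box₀ a) = box₀ a) ∧
    Set.range box₀ = (L₀ : Set L) ∧
    Set.range dia₀ = (L₀ : Set L) := by
  have hbox : IsGreatestBelow (L₀ : Set L) box₀ := hmax
  have hdia : IsGreatestBelow (α := Lᵒᵈ) (L₀ : Set L) dia₀ := IsLeastAbove.dual hmin
  exact ⟨fun a => inf_eq_left.2 (hbox.apply_le a), fun a => sup_eq_left.2 (hdia.apply_le a),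
    hbox.map_inf L₀.infClosed, hdia.map_inf L₀.supClosed.dual,
    fun a => hbox.apply_eq_self (hdia.apply_mem a), fun a => hdia.apply_eq_self (hbox.apply_mem a),
    hbox.range_eq, hdia.range_eq⟩
end

section
/- Let A be a residuated lattice (FLe-algebra): a commutative monoid (A, ·, e) on a lattice with a residuum → satisfying a·b ≤ c ⟺ a ≤ b → c. Suppose ◻, ◇ : A → A make A an m-lattice and satisfy ◻(◻a ⋆ ◻b) = ◻a ⋆ ◻b for each of the operations ⋆ ∈ {∧, ∨, ·, →}, and ◻e = e, ◻f = f for the constants. Then ◻(a → ◻b) = ◇a → ◻b for all a, b ∈ A. -/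
/-!
Both sides are `◻`-fixed implications with target `◻b`. For `≥`: `◇a → ◻b` is `◻`-fixed (as `◇a = ◻◇a`)
and lies below `a → ◻b`, so it lies below the interior `◻(a → ◻b)`. For `≤`: with `C = ◻(a → ◻b)`, the
element `C → ◻b` is `◻`-fixed, hence also `◇`-fixed, and it lies above `a`; so it lies above `◇a`, which
is `◇a ≤ C → ◻b`, i.e. `C ≤ ◇a → ◻b`.
-/

namespace Residuation

variable {A : Type*} [Lattice A] {mul himp : A → A → A}

theorem le_himp_comm (hcomm : ∀ a b, mul a b = mul b a)
    (hres : ∀ a b c, mul a b ≤ c ↔ a ≤ himp b c) {a b c : A} :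
    a ≤ himp b c ↔ b ≤ himp a c := by
  rw [← hres, hcomm, hres]

theorem himp_anti_left (hcomm : ∀ a b, mul a b = mul b a)
    (hres : ∀ a b c, mul a b ≤ c ↔ a ≤ himp b c) {a a' : A} (h : a ≤ a') (c : A) :
    himp a' c ≤ himp a c := by
  rw [Residuation.le_himp_comm hcomm hres]
  exact h.trans ((Residuation.le_himp_comm hcomm hres).mp le_rfl)

end Residuation

section Modal

variable {A : Type*} [Lattice A] {box dia : A → A}

theorem le_box_of_box_eq (hmono : Monotone box) {x y : A} (hx : box x = x) (h : x ≤ y) :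
    x ≤ box y :=
  hx ▸ hmono h

theorem dia_le_of_box_eq (hdia3 : ∀ a, dia (box a) = box a) (hmono : Monotone dia) {a x : A}
    (hx : box x = x) (h : a ≤ x) : dia a ≤ x :=
  calc dia a ≤ dia x := hmono h
    _ = x := by rw [← hx, hdia3]

end Modal

theorem mFLe_L6_box_general {A : Type*} [Lattice A] (mul himp : A → A → A)
    (box dia : A → A)
    (hcomm : ∀ a b : A, mul a b = mul b a)
    (hres : ∀ a b c : A, mul a b ≤ c ↔ a ≤ himp b c)
    (hbox1 : ∀ a, box a ⊓ a = box a)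
    (hdia1 : ∀ a, dia a ⊔ a = dia a)
    (hbox2 : ∀ a b, box (a ⊓ b) = box a ⊓ box b)
    (hdia2 : ∀ a b, dia (a ⊔ b) = dia a ⊔ dia b)
    (hbox3 : ∀ a, box (dia a) = dia a)
    (hdia3 : ∀ a, dia (box a) = box a)
    (himpbox : ∀ a b, box (himp (box a) (box b)) = himp (box a) (box b)) :
    ∀ a b : A, box (himp a (box b)) = himp (dia a) (box b) := by
  intro a b
  have box_mono : Monotone box := OrderHomClass.mono (InfHom.mk box hbox2)
  have dia_mono : Monotone dia := OrderHomClass.mono (SupHom.mk dia hdia2)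
  apply le_antisymm
  · rw [Residuation.le_himp_comm hcomm hres]
    refine dia_le_of_box_eq hdia3 dia_mono (himpbox _ b) ?_
    rw [Residuation.le_himp_comm hcomm hres]
    exact inf_eq_left.mp (hbox1 _)
  · have fixed : box (himp (dia a) (box b)) = himp (dia a) (box b) := by
      simpa only [hbox3] using himpbox (dia a) b
    exact le_box_of_box_eq box_mono fixed
      (Residuation.himp_anti_left hcomm hres (sup_eq_left.mp (hdia1 a)) _)

theorem mFLe_L6_box {A : Type*} [Lattice A] (mul himp : A → A → A) (e f : A)
    (box dia : A → A)
    (hassoc : ∀ a b c : A, mul (mul a b) c = mul a (mul b c))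
    (hcomm : ∀ a b : A, mul a b = mul b a)
    (hunit : ∀ a : A, mul a e = a)
    (hres : ∀ a b c : A, mul a b ≤ c ↔ a ≤ himp b c)
    (hbox1 : ∀ a, box a ⊓ a = box a)
    (hdia1 : ∀ a, dia a ⊔ a = dia a)
    (hbox2 : ∀ a b, box (a ⊓ b) = box a ⊓ box b)
    (hdia2 : ∀ a b, dia (a ⊔ b) = dia a ⊔ dia b)
    (hbox3 : ∀ a, box (dia a) = dia a)
    (hdia3 : ∀ a, dia (box a) = box a)
    (hinf : ∀ a b, box (box a ⊓ box b) = box a ⊓ box b)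
    (hsup : ∀ a b, box (box a ⊔ box b) = box a ⊔ box b)
    (hmul : ∀ a b, box (mul (box a) (box b)) = mul (box a) (box b))
    (himpbox : ∀ a b, box (himp (box a) (box b)) = himp (box a) (box b))
    (he : box e = e)
    (hf : box f = f) :
    ∀ a b : A, box (himp a (box b)) = himp (dia a) (box b) :=
  mFLe_L6_box_general mul himp box dia hcomm hres hbox1 hdia1 hbox2 hdia2 hbox3 hdia3 himpbox
end

section
/- Let A be a residuated lattice (FLe-algebra) with m-lattice operations ◻, ◇ satisfying ◻(◻a ⋆ ◻b) = ◻a ⋆ ◻b for each operation ⋆ ∈ {∧, ∨, ·, →} and ◻e = e, ◻f = f. Then ◻(◻a → b) = ◻a → ◻b for all a, b ∈ A. -/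
/-!
Since ◻ is monotone, a ◻-fixed element lying below `x` lies below `◻x`. For `≤`, residuate: the
element `◻(◻a → b) · ◻a` is ◻-fixed by (⋆◻) for `·` and lies below `b`. For `≥`, the element
`◻a → ◻b` is ◻-fixed by (⋆◻) for `→` and lies below `◻a → b`.
-/

theorem Function.IsFixedPt.le_apply_of_le {α : Type*} [Preorder α] {g : α → α} {c x : α}
    (hg : Monotone g) (hc : Function.IsFixedPt g c) (h : c ≤ x) : c ≤ g x :=
  hc ▸ hg h

namespace Residuated

variable {A : Type*} [Preorder A] {mul himp : A → A → A}

theorem mul_himp_le (hres : ∀ a b c : A, mul a b ≤ c ↔ a ≤ himp b c) (b c : A) :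
    mul (himp b c) b ≤ c :=
  (hres _ _ _).mpr le_rfl

theorem himp_mono_right (hres : ∀ a b c : A, mul a b ≤ c ↔ a ≤ himp b c) {b c d : A}
    (h : c ≤ d) : himp b c ≤ himp b d :=
  (hres _ _ _).mp ((mul_himp_le hres b c).trans h)

end Residuated

theorem mFLe_L6_dia_general {A : Type*} [Lattice A] (mul himp : A → A → A)
    (box : A → A)
    (hres : ∀ a b c : A, mul a b ≤ c ↔ a ≤ himp b c)
    (hbox1 : ∀ a, box a ⊓ a = box a)
    (hbox2 : ∀ a b, box (a ⊓ b) = box a ⊓ box b)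
    (hmul : ∀ a b, box (mul (box a) (box b)) = mul (box a) (box b))
    (himpbox : ∀ a b, box (himp (box a) (box b)) = himp (box a) (box b)) :
    ∀ a b : A, box (himp (box a) b) = himp (box a) (box b) := by
  have hmono : Monotone box := Monotone.of_map_inf hbox2
  have hbox_le : ∀ a, box a ≤ a := fun a => inf_eq_left.mp (hbox1 a)
  intro a b
  apply le_antisymm
  · rw [← hres]
    exact Function.IsFixedPt.le_apply_of_le hmono (hmul (himp (box a) b) a)
      ((hres _ _ _).mpr (hbox_le _))
  · exact Function.IsFixedPt.le_apply_of_le hmono (himpbox a b)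
      (Residuated.himp_mono_right hres (hbox_le b))

theorem mFLe_L6_dia {A : Type*} [Lattice A] (mul himp : A → A → A) (e f : A)
    (box dia : A → A)
    (hassoc : ∀ a b c : A, mul (mul a b) c = mul a (mul b c))
    (hcomm : ∀ a b : A, mul a b = mul b a)
    (hunit : ∀ a : A, mul a e = a)
    (hres : ∀ a b c : A, mul a b ≤ c ↔ a ≤ himp b c)
    (hbox1 : ∀ a, box a ⊓ a = box a)
    (hdia1 : ∀ a, dia a ⊔ a = dia a)
    (hbox2 : ∀ a b, box (a ⊓ b) = box a ⊓ box b)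
    (hdia2 : ∀ a b, dia (a ⊔ b) = dia a ⊔ dia b)
    (hbox3 : ∀ a, box (dia a) = dia a)
    (hdia3 : ∀ a, dia (box a) = box a)
    (hinf : ∀ a b, box (box a ⊓ box b) = box a ⊓ box b)
    (hsup : ∀ a b, box (box a ⊔ box b) = box a ⊔ box b)
    (hmul : ∀ a b, box (mul (box a) (box b)) = mul (box a) (box b))
    (himpbox : ∀ a b, box (himp (box a) (box b)) = himp (box a) (box b))
    (he : box e = e)
    (hf : box f = f) :
    ∀ a b : A, box (himp (box a) b) = himp (box a) (box b) :=
  mFLe_L6_dia_general mul himp box hres hbox1 hbox2 hmul himpbox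
end

section
/- Let L be a lattice, L₀ a relatively complete sublattice, and define ◻₀a := max{b ∈ L₀ : b ≤ a}, ◇₀a := min{b ∈ L₀ : a ≤ b}. Then the constructions 'take image of ◻' and 'induce ◻₀, ◇₀ from a relatively complete sublattice' are mutually inverse: starting from an m-lattice (L, ◻, ◇), the operations induced by the relatively complete sublattice ◻L coincide with ◻ and ◇; and starting from a relatively complete sublattice L₀, the image of ◻₀ is exactly L₀. -/
/-! Since `◻◻a = ◻◇◻a = ◇◻a = ◻a`, every element of `◻L` is fixed by the monotone, deflationary
`◻`, so `◻a` is the largest element of `◻L` below `a`; dually `◇` is monotone and inflationary and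
fixes `◻L` because `◇◻ = ◻`. Conversely, each `b ∈ L₀` is the largest element of `L₀` below
itself, so `◻₀ b = b`. -/

section MLattice

variable {L : Type*} [Lattice L] {box dia : L → L}

theorem isGreatest_box_range_le (box_inf_self : ∀ a, box a ⊓ a = box a)
    (box_inf : ∀ a b, box (a ⊓ b) = box a ⊓ box b) (box_dia : ∀ a, box (dia a) = dia a)
    (dia_box : ∀ a, dia (box a) = box a) (a : L) :
    IsGreatest {b | b ∈ Set.range box ∧ b ≤ a} (box a) := by
  refine ⟨⟨Set.mem_range_self a, inf_eq_left.mp (box_inf_self a)⟩, ?_⟩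
  rintro _ ⟨⟨c, rfl⟩, hca⟩
  calc box c = box (box c) := by rw [← dia_box c, box_dia]
    _ ≤ box a := Monotone.of_map_inf box_inf hca

theorem isLeast_dia_range_ge (dia_sup_self : ∀ a, dia a ⊔ a = dia a)
    (dia_sup : ∀ a b, dia (a ⊔ b) = dia a ⊔ dia b) (box_dia : ∀ a, box (dia a) = dia a)
    (dia_box : ∀ a, dia (box a) = box a) (a : L) :
    IsLeast {b | b ∈ Set.range box ∧ a ≤ b} (dia a) := by
  refine ⟨⟨⟨dia a, box_dia a⟩, sup_eq_left.mp (dia_sup_self a)⟩, ?_⟩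
  rintro _ ⟨⟨c, rfl⟩, hac⟩
  calc dia a ≤ dia (box c) := Monotone.of_map_sup dia_sup hac
    _ = box c := dia_box c

end MLattice

theorem range_eq_of_isGreatest_mem_le {α : Type*} [PartialOrder α] {S : Set α} {f : α → α}
    (hf : ∀ a, IsGreatest {b | b ∈ S ∧ b ≤ a} (f a)) : Set.range f = S :=
  Set.Subset.antisymm (Set.range_subset_iff.mpr fun a => (hf a).1.1) fun b hb =>
    ⟨b, (hf b).unique ⟨⟨hb, le_rfl⟩, fun _ hc => hc.2⟩⟩

theorem mLattice_relativelyComplete_correspondence {L : Type*} [Lattice L] :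
    ((∀ (box dia : L → L),
      (∀ a, box a ⊓ a = box a) →
      (∀ a, dia a ⊔ a = dia a) →
      (∀ a b, box (a ⊓ b) = box a ⊓ box b) →
      (∀ a b, dia (a ⊔ b) = dia a ⊔ dia b) →
      (∀ a, box (dia a) = dia a) →
      (∀ a, dia (box a) = box a) →
      ∀ a : L, IsGreatest {b | b ∈ Set.range box ∧ b ≤ a} (box a) ∧
        IsLeast {b | b ∈ Set.range box ∧ a ≤ b} (dia a)) ∧
    (∀ (L₀ : Sublattice L) (box₀ dia₀ : L → L),
      (∀ a : L, IsGreatest {b | b ∈ L₀ ∧ b ≤ a} (box₀ a)) →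
      (∀ a : L, IsLeast {b | b ∈ L₀ ∧ a ≤ b} (dia₀ a)) →
      Set.range box₀ = (L₀ : Set L))) :=
  ⟨fun _ _ box_inf_self dia_sup_self box_inf dia_sup box_dia dia_box a =>
      ⟨isGreatest_box_range_le box_inf_self box_inf box_dia dia_box a,
        isLeast_dia_range_ge dia_sup_self dia_sup box_dia dia_box a⟩,
    fun _ _ _ hbox _ => range_eq_of_isGreatest_mem_le hbox⟩
end
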